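/- arXiv:math/0610799 — 4 statements merged into one kernel-verified Lean document; each statement's English description precedes it below -/
import Mathlib

section
/- In the classical (h = 0, fully commutative) setting, for M×N matrices X = (x_{ij}) and P = (p_{ij}) with commuting entries, diagonal matrices Z = diag(z_1,…,z_N), Λ = diag(λ_1,…,λ_M), and scalars u, p_u: ∏_{a=1}^N (u − z_a) · det( (p_u − λ_i)δ_{ij} − Σ_{a=1}^N x_{ja}p_{ia}/(u − z_a) )_{i,j=1}^M = Σ_{A,B, |A|=|B|} (−1)^{|A|} ∏_{a∉B}(u − z_a) ∏_{b∉A}(p_u − λ_b) · det(x_{ab})_{a∈A,b∈B} · det(p_{ab})_{a∈A,b∈B}, where A ranges over subsets of {1,…,M} and B over subsets of {1,…,N} of equal cardinality. -/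
/-!
The left side is the Schur-complement expansion of the determinant of the block matrix
`[[diag (u - z), Xᵀ], [P, diag (p_u - λ)]]`. Writing that matrix as a diagonal matrix plus the
anti-diagonal block matrix `[[0, Xᵀ], [P, 0]]` and expanding multilinearly in the rows turns its
determinant into a sum, over subsets `B ⊔ A`, of principal minors of `[[0, Xᵀ], [P, 0]]`
weighted by the diagonal entries outside the subset. Such a minor vanishes unless
`|A| = |B|`, and is then `(-1)^|A| det X_{A,B} det P_{A,B}`.
-/

open Matrix

theorem Finset.compl_disjSum {ι κ : Type*} [Fintype ι] [Fintype κ] [DecidableEq ι]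
    [DecidableEq κ] (s : Finset ι) (t : Finset κ) : (s.disjSum t)ᶜ = sᶜ.disjSum tᶜ := by
  ext (a | b) <;> simp

namespace Matrix

variable {R K : Type*} [CommRing R] [Field K] {ι κ : Type*}

section Fintype

variable [Fintype ι] [Fintype κ] [DecidableEq ι] [DecidableEq κ]

theorem det_diagonal_add (d : ι → R) (E : Matrix ι ι R) :
    det (diagonal d + E) =
      ∑ s : Finset ι, (∏ i ∈ sᶜ, d i) * det (E.submatrix (↑) (↑) : Matrix s s R) := by
  have hexp := (detRowAlternating : (ι → R) [⋀^ι]→ₗ[R] R).map_add_univ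
    (fun i => (E i : ι → R)) (fun i => (diagonal d i : ι → R))
  rw [add_comm]
  refine hexp.trans (Finset.sum_congr rfl fun s _ => ?_)
  have hrows : s.piecewise (fun i => (E i : ι → R)) (fun i => diagonal d i) =
      of fun i j => (if i ∈ sᶜ then d i else 1) *
        of (s.piecewise E.row (1 : Matrix ι ι R).row) i j := by
    ext i j
    by_cases hi : i ∈ s <;> simp [hi, Finset.piecewise, diagonal_apply, one_apply]
  change det _ = _
  rw [hrows, det_mul_column, det_piecewise_one_eq_submatrix_det, Finset.prod_ite_mem,
    Finset.univ_inter]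

omit [DecidableEq κ] in
theorem det_mul_eq_zero_of_card_lt (A : Matrix ι κ K) (B : Matrix κ ι K)
    (h : Fintype.card κ < Fintype.card ι) : det (A * B) = 0 := by
  by_contra hdet
  have hrank := rank_of_isUnit _ ((isUnit_iff_isUnit_det _).mpr (isUnit_iff_ne_zero.mpr hdet))
  have := (rank_mul_le_left A B).trans (rank_le_card_width A)
  omega

-- Both factorizations pass through `2 * min (card ι) (card κ) < card ι + card κ` coordinates.
theorem det_fromBlocks_zero₁₁_zero₂₂_of_card_ne (Y : Matrix ι κ K) (P : Matrix κ ι K)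
    (h : Fintype.card ι ≠ Fintype.card κ) :
    det (fromBlocks 0 Y P 0) = 0 := by
  rcases h.lt_or_gt with h | h
  · rw [show fromBlocks 0 Y P 0 = (fromBlocks 1 0 0 P : Matrix (ι ⊕ κ) (ι ⊕ ι) K) *
        (fromBlocks 0 Y 1 0 : Matrix (ι ⊕ ι) (ι ⊕ κ) K) by simp [fromBlocks_multiply]]
    exact det_mul_eq_zero_of_card_lt _ _ (by simp only [Fintype.card_sum]; omega)
  · rw [show fromBlocks 0 Y P 0 = (fromBlocks Y 0 0 1 : Matrix (ι ⊕ κ) (κ ⊕ κ) K) *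
        (fromBlocks 0 1 P 0 : Matrix (κ ⊕ κ) (ι ⊕ κ) K) by simp [fromBlocks_multiply]]
    exact det_mul_eq_zero_of_card_lt _ _ (by simp only [Fintype.card_sum]; omega)

omit [Fintype ι] [DecidableEq ι] in
theorem det_fromBlocks_zero_one_one_zero :
    det (fromBlocks 0 1 1 0 : Matrix (κ ⊕ κ) (κ ⊕ κ) R) = (-1) ^ Fintype.card κ := by
  rw [show (fromBlocks 0 1 1 0 : Matrix (κ ⊕ κ) (κ ⊕ κ) R) =
      fromBlocks 1 1 0 1 * fromBlocks 1 0 (-1) 1 * fromBlocks (-1) 1 0 1 by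
    simp [fromBlocks_multiply]]
  simp [det_neg]

omit [Fintype ι] [DecidableEq ι] in
theorem det_fromBlocks_zero₁₁_zero₂₂ (Y P : Matrix κ κ R) :
    det (fromBlocks 0 Y P 0) = (-1) ^ Fintype.card κ * det Y * det P := by
  rw [show fromBlocks 0 Y P 0 = fromBlocks 0 1 1 0 * fromBlocks P 0 0 Y by
    simp [fromBlocks_multiply], det_mul, det_fromBlocks_zero_one_one_zero,
    det_fromBlocks_zero₂₁]
  ring

theorem det_fromBlocks_diagonal₁₁ (d : ι → K) (hd : ∀ i, d i ≠ 0)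
    (B : Matrix ι κ K) (C : Matrix κ ι K) (D : Matrix κ κ K) :
    det (fromBlocks (diagonal d) B C D) =
      (∏ i, d i) * det (of fun k l => D k l - ∑ i, C k i * B i l / d i) := by
  let := invertibleOfRightInverse (diagonal d) (diagonal d⁻¹) <| by
    simp [diagonal_mul_diagonal, hd]
  have hinv : ⅟(diagonal d) = diagonal d⁻¹ := rfl
  rw [det_fromBlocks₁₁, det_diagonal, hinv]
  congr 2
  ext k l
  simp [mul_apply, diagonal_apply, div_eq_mul_inv, mul_right_comm]

end Fintype

theorem det_submatrix_disjSum_fromBlocks_zero_transpose_zero [DecidableEq ι] [DecidableEq κ]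
    [LinearOrder ι] [LinearOrder κ] (Y P : Matrix κ ι K) (s : Finset ι) (t : Finset κ) :
    det ((fromBlocks 0 Yᵀ P 0).submatrix ((↑) : s.disjSum t → ι ⊕ κ) (↑)) =
      if h : s.card = t.card then
        (-1) ^ t.card * det (of fun i j => Y (t.orderEmbOfFin rfl i) (s.orderEmbOfFin h j)) *
          det (of fun i j => P (t.orderEmbOfFin rfl i) (s.orderEmbOfFin h j))
      else 0 := by
  let e : s ⊕ t ≃ s.disjSum t := (Equiv.subtypeSum.trans (Equiv.sumCongr
    (Equiv.subtypeEquivRight fun _ => Finset.inl_mem_disjSum)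
    (Equiv.subtypeEquivRight fun _ => Finset.inr_mem_disjSum))).symm
  have hblocks : ((fromBlocks 0 Yᵀ P 0).submatrix ((↑) : s.disjSum t → ι ⊕ κ) (↑)).submatrix e e =
      fromBlocks 0 (Yᵀ.submatrix (↑) (↑)) (P.submatrix (↑) (↑)) 0 := by
    ext (i | i) (j | j) <;> rfl
  rw [← det_submatrix_equiv_self e, hblocks]
  split_ifs with h
  · let o := Equiv.sumCongr (s.orderIsoOfFin h).toEquiv (t.orderIsoOfFin rfl).toEquiv
    have hsquare :
        (fromBlocks 0 (Yᵀ.submatrix (↑) (↑)) (P.submatrix (↑) (↑)) 0).submatrix o o =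
          fromBlocks 0 (of fun i j => Y (t.orderEmbOfFin rfl i) (s.orderEmbOfFin h j))ᵀ
            (of fun i j => P (t.orderEmbOfFin rfl i) (s.orderEmbOfFin h j)) 0 := by
      ext (i | i) (j | j) <;> rfl
    rw [← det_submatrix_equiv_self o, hsquare, det_fromBlocks_zero₁₁_zero₂₂, det_transpose,
      Fintype.card_fin]
  · exact det_fromBlocks_zero₁₁_zero₂₂_of_card_ne _ _ (by simpa using h)

end Matrix

/-- The `h = 0` (fully commutative) case of the generalized Capelli identity:
`∏_a (u − z_a) · det((p_u − λ_i)δ_{ij} − Σ_a x_{ja}p_{ia}/(u − z_a))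
 = Σ_{A,B,|A|=|B|} (−1)^{|A|} ∏_{a∉B}(u − z_a) ∏_{b∉A}(p_u − λ_b)
   · det(x_{ab})_{A,B} · det(p_{ab})_{A,B}`. -/
theorem generalized_capelli_commutative {M N : ℕ} {K : Type*} [Field K]
    (u pu : K) (z : Fin N → K) (lam : Fin M → K) (x p : Fin M → Fin N → K)
    (hu : ∀ a, u ≠ z a) :
    (∏ a, (u - z a)) *
      Matrix.det (Matrix.of fun i j : Fin M =>
        (if i = j then pu - lam i else 0) - ∑ a, x j a * p i a / (u - z a)) =
    ∑ A : Finset (Fin M), ∑ B : Finset (Fin N),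
      if h : B.card = A.card then
        (-1) ^ A.card * (∏ a ∈ Bᶜ, (u - z a)) * (∏ b ∈ Aᶜ, (pu - lam b)) *
          Matrix.det (Matrix.of fun i j : Fin A.card =>
            x (A.orderEmbOfFin rfl i) (B.orderEmbOfFin h j)) *
          Matrix.det (Matrix.of fun i j : Fin A.card =>
            p (A.orderEmbOfFin rfl i) (B.orderEmbOfFin h j))
      else 0 := by
  let X : Matrix (Fin M) (Fin N) K := of x
  let P : Matrix (Fin M) (Fin N) K := of p
  have hsplit : fromBlocks (diagonal fun a => u - z a) Xᵀ P (diagonal fun i => pu - lam i) =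
      diagonal (Sum.elim (fun a => u - z a) fun i => pu - lam i) + fromBlocks 0 Xᵀ P 0 := by
    rw [← fromBlocks_diagonal, fromBlocks_add]
    simp
  calc _ = det (fromBlocks (diagonal fun a => u - z a) Xᵀ P (diagonal fun i => pu - lam i)) := by
        rw [det_fromBlocks_diagonal₁₁ _ fun a => sub_ne_zero.2 (hu a)]
        congr 2
        ext i j
        simp [X, P, diagonal_apply, mul_comm]
    _ = ∑ B : Finset (Fin N), ∑ A : Finset (Fin M),
          (∏ a ∈ Bᶜ, (u - z a)) * (∏ b ∈ Aᶜ, (pu - lam b)) *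
            det ((fromBlocks 0 Xᵀ P 0).submatrix ((↑) : B.disjSum A → _) (↑)) := by
        rw [hsplit, det_diagonal_add, ← Finset.sumEquiv.symm.toEquiv.sum_comp,
          Fintype.sum_prod_type]
        refine Finset.sum_congr rfl fun B _ => Finset.sum_congr rfl fun A _ => ?_
        change (∏ i ∈ (B.disjSum A)ᶜ, _) * _ = _
        rw [Finset.compl_disjSum, Finset.prod_sumElim]
        rfl
    _ = _ := by
        rw [Finset.sum_comm]
        refine Finset.sum_congr rfl fun A _ => Finset.sum_congr rfl fun B _ => ?_
        rw [det_submatrix_disjSum_fromBlocks_zero_transpose_zero]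
        split_ifs
        · simp only [X, P, of_apply]
          ring
        · simp
end

section
/- (Row antisymmetry of rdet(G_h).) Let G_h be the M×M matrix with entries G_{ij} = (p_u − λ_i)δ_{ij} − Σ_{a=1}^N x_{ja}p_{ia}/(u − z_a) in the algebra with [p_u, u] = h, [p_{ij}, x_{ij}] = h and all other generator pairs commuting. If σG_h denotes the matrix obtained from G_h by permuting rows by a permutation σ ∈ S_M, then rdet(σG_h) = sgn(σ)·rdet(G_h). -/
open scoped BigOperators

/-- Row determinant over a (possibly noncommutative) ring. -/
noncomputable def rdet {n : ℕ} {R : Type*} [Ring R] (A : Matrix (Fin n) (Fin n) R) : R :=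
  ∑ σ : Equiv.Perm (Fin n),
    (Equiv.Perm.sign σ : ℤ) • (List.ofFn fun i => A i (σ i)).prod

/-! Write `⁅a, b⁆ = a * b - b * a`. The row determinant changes sign under the swap of two
adjacent rows `k, k + 1` as soon as `⁅H i a, H j b⁆ = ⁅H i b, H j a⁆` for all `i, j, a, b`:
for each `τ` the two ordered products differ by `⋯ * ⁅H k (τ k), H (k+1) (τ (k+1))⁆ * ⋯`, and
this commutator is unchanged when `τ` is replaced by `τ ∘ (k k+1)`, whose sign is opposite, so
these differences cancel in pairs. Adjacent transpositions generate the symmetric group.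

For `G_h` the column symmetry of commutators is a computation: the only nonzero commutators
involved are `⁅p_{ia}, x_{ia}⁆ = h` and `⁅p_u, w_a⁆ = -h w_a²`, which give
`⁅G_{ia}, G_{jb}⁆ = h (δ_{ia} Q_{jb} - δ_{jb} Q_{ia} + δ_{ib} Q_{ja} - δ_{ja} Q_{ib})` with
`Q_{ij} = Σ_c x_{jc} p_{ic} w_c²`, symmetric in `a, b`. -/

namespace List

theorem take_ofFn_congr {α : Type*} {m k : ℕ} {f g : Fin m → α}
    (hfg : ∀ i : Fin m, (i : ℕ) < k → f i = g i) : (ofFn f).take k = (ofFn g).take k :=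
  ext_getElem (by simp) fun i hi _ => by
    simp only [getElem_take, List.getElem_ofFn]
    exact hfg _ (by simp at hi ⊢; omega)

theorem drop_ofFn_congr {α : Type*} {m k : ℕ} {f g : Fin m → α}
    (hfg : ∀ i : Fin m, k ≤ (i : ℕ) → f i = g i) : (ofFn f).drop k = (ofFn g).drop k :=
  ext_getElem (by simp) fun i hi _ => by
    simp only [getElem_drop, List.getElem_ofFn]
    exact hfg _ (by simp)

theorem prod_ofFn_eq_take_mul_mul_drop {M : Type*} [Monoid M] {n : ℕ} (f : Fin (n + 1) → M)
    (k : Fin n) : (ofFn f).prod =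
      ((ofFn f).take k).prod * (f k.castSucc * f k.succ) * ((ofFn f).drop (k + 2)).prod := by
  rw [← prod_take_mul_prod_drop (ofFn f) k, drop_eq_getElem_cons (by simp),
    drop_eq_getElem_cons (by simp), prod_cons, prod_cons, List.getElem_ofFn,
    List.getElem_ofFn, mul_assoc, mul_assoc]
  rfl

variable {R : Type*} [Ring R] {n : ℕ}

theorem prod_ofFn_sub_prod_ofFn_comp_swap (f : Fin (n + 1) → R) (k : Fin n) :
    (ofFn f).prod - (ofFn (f ∘ Equiv.swap k.castSucc k.succ)).prod =
      ((ofFn f).take k).prod * ⁅f k.castSucc, f k.succ⁆ *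
        ((ofFn f).drop (k + 2)).prod := by
  have hfix : ∀ i, i ≠ k.castSucc → i ≠ k.succ → (f ∘ Equiv.swap k.castSucc k.succ) i = f i :=
    fun i h₁ h₂ => congrArg f (Equiv.swap_apply_of_ne_of_ne h₁ h₂)
  rw [prod_ofFn_eq_take_mul_mul_drop f k,
    prod_ofFn_eq_take_mul_mul_drop (f ∘ Equiv.swap k.castSucc k.succ) k,
    take_ofFn_congr fun i hi => hfix i (by grind) (by grind),
    drop_ofFn_congr fun i hi => hfix i (by grind) (by grind)]
  simp only [Function.comp_apply, Equiv.swap_apply_left, Equiv.swap_apply_right, Ring.lie_def,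
    mul_sub, sub_mul]

theorem prod_ofFn_sub_prod_ofFn_comp_swap_congr {f g : Fin (n + 1) → R} (k : Fin n)
    (hfg : ∀ i, i ≠ k.castSucc → i ≠ k.succ → f i = g i)
    (hlie : ⁅f k.castSucc, f k.succ⁆ = ⁅g k.castSucc, g k.succ⁆) :
    (ofFn f).prod - (ofFn (f ∘ Equiv.swap k.castSucc k.succ)).prod =
      (ofFn g).prod - (ofFn (g ∘ Equiv.swap k.castSucc k.succ)).prod := by
  rw [prod_ofFn_sub_prod_ofFn_comp_swap, prod_ofFn_sub_prod_ofFn_comp_swap, hlie,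
    take_ofFn_congr fun i hi => hfg i (by grind) (by grind),
    drop_ofFn_congr fun i hi => hfg i (by grind) (by grind)]

end List

open Equiv Equiv.Perm

section

variable {R : Type*} [Ring R] {n : ℕ}

theorem rdet_permute_swap (H : Matrix (Fin (n + 1)) (Fin (n + 1)) R)
    (hH : ∀ i j a b, ⁅H i a, H j b⁆ = ⁅H i b, H j a⁆) (k : Fin n) :
    rdet (H.submatrix (swap k.castSucc k.succ) id) = -rdet H := by
  have hk : k.castSucc ≠ k.succ := Fin.castSucc_lt_succ.ne
  set s := swap k.castSucc k.succ
  let row (τ : Perm (Fin (n + 1))) : Fin (n + 1) → R := fun i => H i (τ i)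
  let T (τ : Perm (Fin (n + 1))) : R :=
    (List.ofFn (row τ)).prod - (List.ofFn (row τ ∘ s)).prod
  have hsign : ∀ τ, (sign (τ * s) : ℤ) = -sign τ := fun τ => by
    simp [s, Perm.sign_mul, sign_swap hk]
  have hT : ∀ τ, T (τ * s) = T τ := fun τ =>
    List.prod_ofFn_sub_prod_ofFn_comp_swap_congr k
      (fun i h₁ h₂ => congrArg (H i) (congrArg τ (swap_apply_of_ne_of_ne h₁ h₂)))
      (by simp [row, s, hH])
  have hsum : ∑ τ, (sign τ : ℤ) • T τ = 0 :=
    Finset.sum_ninvolution (· * s) (fun τ => by rw [hsign, hT, neg_smul, add_neg_cancel])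
      (fun τ _ => by simpa [s] using hk) (fun _ => Finset.mem_univ _)
      (fun τ => by simp [s, mul_assoc])
  have hswap : rdet (H.submatrix s id) = -∑ τ, (sign τ : ℤ) • (List.ofFn (row τ ∘ s)).prod := by
    rw [rdet, ← Finset.sum_neg_distrib]
    refine (Fintype.sum_equiv (Equiv.mulRight s) _ _ fun τ => ?_).symm
    rw [coe_mulRight, hsign, neg_smul]
    rfl
  simp only [T, smul_sub, Finset.sum_sub_distrib, sub_eq_zero] at hsum
  rw [hswap, rdet, hsum]

theorem rdet_permute {m : ℕ} (σ : Perm (Fin m)) (H : Matrix (Fin m) (Fin m) R)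
    (hH : ∀ i j a b, ⁅H i a, H j b⁆ = ⁅H i b, H j a⁆) :
    rdet (H.submatrix σ id) = (sign σ : ℤ) • rdet H := by
  cases m with
  | zero => simp [Subsingleton.elim σ 1]
  | succ n =>
    have hσ : σ ∈ Submonoid.closure (Set.range fun k : Fin n => swap k.castSucc k.succ) :=
      mclosure_swap_castSucc_succ n ▸ Submonoid.mem_top σ
    induction hσ using Submonoid.closure_induction generalizing H with
    | mem τ hτ =>
      obtain ⟨k, rfl⟩ := hτ
      rw [rdet_permute_swap H hH k, sign_swap Fin.castSucc_lt_succ.ne]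
      simp
    | one => simp
    | mul a b _ _ iha ihb =>
      change rdet ((H.submatrix a id).submatrix b id) = _
      rw [ihb (H.submatrix a id) fun i j => hH (a i) (a j), iha H hH, smul_smul,
        Perm.sign_mul, Units.val_mul, mul_comm]

end

section

attribute [local instance] LieRing.ofAssociativeRing

variable {K A : Type*} [CommRing K] [Ring A] [Algebra K A]

theorem lie_mul_mul_eq_smul_sub_smul {x₁ p₁ w₁ x₂ p₂ w₂ : A} {c₁ c₂ : K}
    (hx : Commute x₁ x₂) (hp : Commute p₁ p₂) (hw : Commute w₁ w₂)
    (hw₁ : Commute w₁ (x₂ * p₂)) (hw₂ : Commute w₂ (x₁ * p₁))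
    (h₁ : ⁅p₁, x₂⁆ = algebraMap K A c₁) (h₂ : ⁅p₂, x₁⁆ = algebraMap K A c₂) :
    ⁅x₁ * p₁ * w₁, x₂ * p₂ * w₂⁆ = c₁ • (x₁ * p₂ * (w₁ * w₂)) - c₂ • (x₂ * p₁ * (w₁ * w₂)) := by
  have e₁ : x₁ * p₁ * w₁ * (x₂ * p₂ * w₂) = x₁ * (p₁ * x₂) * p₂ * (w₁ * w₂) :=
    calc _ = x₁ * p₁ * (w₁ * (x₂ * p₂)) * w₂ := by simp only [mul_assoc]
      _ = x₁ * p₁ * (x₂ * p₂ * w₁) * w₂ := by rw [hw₁.eq]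
      _ = _ := by simp only [mul_assoc]
  have e₂ : x₂ * p₂ * w₂ * (x₁ * p₁ * w₁) = x₂ * (p₂ * x₁) * p₁ * (w₁ * w₂) :=
    calc _ = x₂ * p₂ * (w₂ * (x₁ * p₁)) * w₁ := by simp only [mul_assoc]
      _ = x₂ * p₂ * (x₁ * p₁ * w₂) * w₁ := by rw [hw₂.eq]
      _ = _ := by simp only [mul_assoc, hw.eq]
  rw [Ring.lie_def, e₁, e₂, eq_add_of_sub_eq h₁, eq_add_of_sub_eq h₂]
  simp only [mul_add, add_mul, Algebra.smul_def, ← Algebra.commutes _ x₁, ← Algebra.commutes _ x₂,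
    mul_assoc]
  rw [← mul_assoc p₁ p₂, hp.eq, ← mul_assoc x₁ x₂, hx.eq]
  simp only [mul_assoc]
  abel

/-- With `w a = (u - z a)⁻¹` this is the sum `Σ_a x_{ja} p_{ia} / (u - z_a)` in `G_h`. -/
def couplingSum {M N : ℕ} {A : Type*} [Ring A] (x p : Fin M → Fin N → A) (v : Fin N → A)
    (i j : Fin M) : A :=
  ∑ c, x j c * p i c * v c

variable {M N : ℕ} (h : K) {x p : Fin M → Fin N → A} {w : Fin N → A}

theorem lie_couplingSum_couplingSum
    (hpx : ∀ i j k l, ⁅p i j, x k l⁆ = if i = k ∧ j = l then algebraMap K A h else 0)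
    (hxx : ∀ i j k l, Commute (x i j) (x k l)) (hpp : ∀ i j k l, Commute (p i j) (p k l))
    (hwx : ∀ a i j, Commute (w a) (x i j)) (hwp : ∀ a i j, Commute (w a) (p i j))
    (hww : ∀ a b, Commute (w a) (w b)) (i j a b : Fin M) :
    ⁅couplingSum x p w i a, couplingSum x p w j b⁆ =
      h • ((if i = b then couplingSum x p (w * w) j a else 0) -
        (if j = a then couplingSum x p (w * w) i b else 0)) := by
  have hpx' : ∀ i j k l, ⁅p i j, x k l⁆ = algebraMap K A (if i = k ∧ j = l then h else 0) :=
    fun i j k l => by rw [hpx]; split_ifs <;> simp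
  have hterm : ∀ c d, ⁅x a c * p i c * w c, x b d * p j d * w d⁆ =
      (if i = b ∧ c = d then h else 0) • (x a c * p j d * (w c * w d)) -
        (if j = a ∧ d = c then h else 0) • (x b d * p i c * (w c * w d)) := fun c d =>
    lie_mul_mul_eq_smul_sub_smul (hxx a c b d) (hpp i c j d) (hww c d)
      ((hwx c b d).mul_right (hwp c j d)) ((hwx d a c).mul_right (hwp d i c))
      (hpx' i c b d) (hpx' j d a c)
  simp only [couplingSum, sum_lie, lie_sum, hterm, Finset.sum_sub_distrib, ite_smul, zero_smul,
    ite_and]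
  split_ifs <;> simp [Finset.smul_sum, smul_sub]

theorem lie_couplingSum_of_commute {q : A} (hqx : ∀ i j, Commute q (x i j))
    (hqp : ∀ i j, Commute q (p i j)) (hqw : ∀ a, ⁅q, w a⁆ = -algebraMap K A h * (w a * w a))
    (i j : Fin M) : ⁅q, couplingSum x p w i j⁆ = -(h • couplingSum x p (w * w) i j) := by
  simp only [couplingSum, lie_sum, Finset.smul_sum, ← Finset.sum_neg_distrib]
  refine Finset.sum_congr rfl fun c _ => ?_
  have hq : Commute q (x j c * p i c) := (hqx j c).mul_right (hqp i c)
  calc ⁅q, x j c * p i c * w c⁆ = x j c * p i c * ⁅q, w c⁆ := by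
        rw [Ring.lie_def, Ring.lie_def, ← mul_assoc, hq.eq, mul_sub]
        simp only [mul_assoc]
    _ = _ := by
        rw [hqw, neg_mul, mul_neg, Algebra.left_comm, Algebra.smul_def, Pi.mul_apply]

theorem lie_eq_of_eq_diag_sub_couplingSum (lam : Fin M → K) {q : A}
    (hpx : ∀ i j k l, ⁅p i j, x k l⁆ = if i = k ∧ j = l then algebraMap K A h else 0)
    (hxx : ∀ i j k l, Commute (x i j) (x k l)) (hpp : ∀ i j k l, Commute (p i j) (p k l))
    (hqx : ∀ i j, Commute q (x i j)) (hqp : ∀ i j, Commute q (p i j))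
    (hwx : ∀ a i j, Commute (w a) (x i j)) (hwp : ∀ a i j, Commute (w a) (p i j))
    (hww : ∀ a b, Commute (w a) (w b)) (hqw : ∀ a, ⁅q, w a⁆ = -algebraMap K A h * (w a * w a))
    {G : Matrix (Fin M) (Fin M) A}
    (hG : ∀ i j, G i j = (if i = j then q - algebraMap K A (lam i) else 0) - couplingSum x p w i j)
    (i j a b : Fin M) :
    ⁅G i a, G j b⁆ = h • (((if i = a then couplingSum x p (w * w) j b else 0) -
        (if j = b then couplingSum x p (w * w) i a else 0)) +
      ((if i = b then couplingSum x p (w * w) j a else 0) -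
        (if j = a then couplingSum x p (w * w) i b else 0))) := by
  have hdiag : ∀ k l, ⁅q - algebraMap K A (lam k), q - algebraMap K A (lam l)⁆ = 0 := fun k l =>
    ((Commute.refl q).sub_right (Algebra.commute_algebraMap_right _ _)).sub_left
      (Algebra.commute_algebraMap_left _ _) |>.lie_eq
  have hdiag_sum : ∀ k l m, ⁅q - algebraMap K A (lam k), couplingSum x p w l m⁆ =
      -(h • couplingSum x p (w * w) l m) := fun k l m => by
    rw [sub_lie, lie_couplingSum_of_commute h hqx hqp hqw,
      (Algebra.commute_algebraMap_left _ _).lie_eq, sub_zero]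
  rw [hG, hG, sub_lie, lie_sub, lie_sub, ← lie_skew (couplingSum x p w i a),
    lie_couplingSum_couplingSum h hpx hxx hpp hwx hwp hww]
  split_ifs <;> simp [hdiag, hdiag_sum, smul_sub, smul_add] <;> abel

end

theorem rdet_row_antisymmetry_general {M N : ℕ} {R : Type*} [Ring R] [Algebra ℂ R]
    (h : ℂ) (lam : Fin M → ℂ)
    (pu : R) (x p : Fin M → Fin N → R) (w : Fin N → R)
    (hpx : ∀ i j k l, p i j * x k l - x k l * p i j =
      if i = k ∧ j = l then algebraMap ℂ R h else 0)
    (hxx : ∀ i j k l, Commute (x i j) (x k l))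
    (hpp : ∀ i j k l, Commute (p i j) (p k l))
    (hpux : ∀ i j, Commute pu (x i j)) (hpup : ∀ i j, Commute pu (p i j))
    (hwx : ∀ a i j, Commute (w a) (x i j))
    (hwp : ∀ a i j, Commute (w a) (p i j))
    (hww : ∀ a b, Commute (w a) (w b))
    (hpuw : ∀ a, pu * w a - w a * pu = -(algebraMap ℂ R h) * (w a * w a))
    (G : Matrix (Fin M) (Fin M) R)
    (hG : ∀ i j, G i j =
      (if i = j then pu - algebraMap ℂ R (lam i) else 0) - ∑ a, x j a * p i a * w a)
    (σ : Equiv.Perm (Fin M)) :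
    rdet (Matrix.of fun i j => G (σ i) j) = (Equiv.Perm.sign σ : ℤ) • rdet G := by
  have hcol : ∀ i j a b, ⁅G i a, G j b⁆ = ⁅G i b, G j a⁆ := fun i j a b => by
    simp only [lie_eq_of_eq_diag_sub_couplingSum h lam hpx hxx hpp hpux hpup hwx hwp hww hpuw hG]
    rw [add_comm]
  exact rdet_permute σ G hcol

/-- Row antisymmetry of `rdet(G_h)`: if `G` is the matrix with entries
`G_{ij} = (p_u − λ_i)δ_{ij} − Σ_a x_{ja}p_{ia}/(u − z_a)` in the algebra `A_h`
(with `[p_u, u] = h`, `[p_{ij}, x_{ij}] = h`, all other pairs of generators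
commuting, `w_a = (u − z_a)⁻¹`), then permuting the rows of `G` by `σ`
multiplies the row determinant by `sgn(σ)`. -/
theorem rdet_row_antisymmetry {M N : ℕ} {R : Type*} [Ring R] [Algebra ℂ R]
    (h : ℂ) (z : Fin N → ℂ) (lam : Fin M → ℂ)
    (u pu : R) (x p : Fin M → Fin N → R) (w : Fin N → R)
    (hpuu : pu * u - u * pu = algebraMap ℂ R h)
    (hpx : ∀ i j k l, p i j * x k l - x k l * p i j =
      if i = k ∧ j = l then algebraMap ℂ R h else 0)
    (hxx : ∀ i j k l, Commute (x i j) (x k l))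
    (hpp : ∀ i j k l, Commute (p i j) (p k l))
    (hux : ∀ i j, Commute u (x i j)) (hup : ∀ i j, Commute u (p i j))
    (hpux : ∀ i j, Commute pu (x i j)) (hpup : ∀ i j, Commute pu (p i j))
    (hw1 : ∀ a, (u - algebraMap ℂ R (z a)) * w a = 1)
    (hw2 : ∀ a, w a * (u - algebraMap ℂ R (z a)) = 1)
    (hwx : ∀ a i j, Commute (w a) (x i j))
    (hwp : ∀ a i j, Commute (w a) (p i j))
    (hww : ∀ a b, Commute (w a) (w b))
    (hpuw : ∀ a, pu * w a - w a * pu = -(algebraMap ℂ R h) * (w a * w a))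
    (G : Matrix (Fin M) (Fin M) R)
    (hG : ∀ i j, G i j =
      (if i = j then pu - algebraMap ℂ R (lam i) else 0) - ∑ a, x j a * p i a * w a)
    (σ : Equiv.Perm (Fin M)) :
    rdet (Matrix.of fun i j => G (σ i) j) = (Equiv.Perm.sign σ : ℤ) • rdet G :=
  rdet_row_antisymmetry_general h lam pu x p w hpx hxx hpp hpux hpup hwx hwp hww hpuw G hG σ
end

section
/- (Degree bound from the generalized Capelli identity.) In the commutative (h=0) setting, the expression ∏_{a=1}^N (u − z_a) · det( (p_u − λ_i)δ_{ij} − Σ_{a=1}^N x_{ja}p_{ia}/(u − z_a) )_{i,j=1}^M, regarded as a polynomial in u and p_u, has degree at most N in u and degree at most M in p_u, and moreover every monomial u^a p_u^b appearing has a ≤ N and b ≤ M with coefficient symmetric under the exchange (M, N, λ, z, X, P, u, p_u) ↔ (N, M, z, λ, Xᵗ, Pᵗ, p_u, u). -/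
open scoped BigOperators
open Polynomial Matrix

private lemma capelli_coeff_mul {R : Type*} [CommSemiring R] {q r : R[X][X]} {n m : ℕ}
    (hq : ∀ b, (q.coeff b).natDegree ≤ n) (hr : ∀ b, (r.coeff b).natDegree ≤ m) :
    ∀ b, ((q * r).coeff b).natDegree ≤ n + m := by
  intro b
  rw [Polynomial.coeff_mul]
  refine Polynomial.natDegree_sum_le_of_forall_le _ _ fun y hy => ?_
  exact Polynomial.natDegree_mul_le.trans (add_le_add (hq _) (hr _))

private lemma capelli_prod_bound {R : Type*} [CommSemiring R] {ι : Type*} (s : Finset ι)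
    (f : ι → R[X][X]) (dP dU : ι → ℕ)
    (h1 : ∀ i ∈ s, (f i).natDegree ≤ dP i)
    (h2 : ∀ i ∈ s, ∀ b, ((f i).coeff b).natDegree ≤ dU i) :
    (∏ i ∈ s, f i).natDegree ≤ ∑ i ∈ s, dP i ∧
      ∀ b, ((∏ i ∈ s, f i).coeff b).natDegree ≤ ∑ i ∈ s, dU i := by
  induction s using Finset.cons_induction with
  | empty =>
    refine ⟨by simp, fun b => ?_⟩
    simp only [Finset.prod_empty, Finset.sum_empty, Polynomial.coeff_one]
    split <;> simp
  | cons a s ha ih =>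
    have hA1 := h1 a (Finset.mem_cons_self a s)
    have hA2 := h2 a (Finset.mem_cons_self a s)
    have ihs := ih (fun i hi => h1 i (Finset.mem_cons_of_mem hi))
      (fun i hi => h2 i (Finset.mem_cons_of_mem hi))
    rw [Finset.prod_cons, Finset.sum_cons, Finset.sum_cons]
    exact ⟨Polynomial.natDegree_mul_le.trans (add_le_add hA1 ihs.1),
      capelli_coeff_mul hA2 ihs.2⟩

set_option maxHeartbeats 2000000 in
/-- Degree bound and exchange symmetry from the generalized Capelli identity
(commutative case): the expression
`∏_a (u − z_a) · det_M((p_u − λ_i)δ_{ij} − Σ_a x_{ja}p_{ia}/(u − z_a))`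
is a polynomial `Σ_{a≤N, b≤M} A_{ab} u^a p_u^b` of degree at most `N` in `u`
and at most `M` in `p_u`, and the coefficients `A_{ab}` are invariant under the
exchange `(M, N, λ, z, X, P, u, p_u) ↔ (N, M, z, λ, Xᵗ, Pᵗ, p_u, u)`. -/
theorem degree_bound_and_exchange_symmetry {M N : ℕ} {K : Type*} [Field K]
    [Algebra ℂ K] (z : Fin N → ℂ) (lam : Fin M → ℂ) (x p : Fin M → Fin N → K) :
    ∃ A : Fin (N + 1) → Fin (M + 1) → K,
      ∀ u pu : K, (∀ a, u ≠ algebraMap ℂ K (z a)) →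
        (∀ b, pu ≠ algebraMap ℂ K (lam b)) →
        ((∏ a, (u - algebraMap ℂ K (z a))) *
            Matrix.det (Matrix.of fun i j : Fin M =>
              (if i = j then pu - algebraMap ℂ K (lam i) else 0) -
                ∑ a, x j a * p i a / (u - algebraMap ℂ K (z a))) =
          ∑ a : Fin (N + 1), ∑ b : Fin (M + 1), A a b * u ^ (a : ℕ) * pu ^ (b : ℕ))
        ∧ ((∏ b, (pu - algebraMap ℂ K (lam b))) *
            Matrix.det (Matrix.of fun i j : Fin N =>
              (if i = j then u - algebraMap ℂ K (z i) else 0) -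
                ∑ b, x b j * p b i / (pu - algebraMap ℂ K (lam b))) =
          ∑ a : Fin (N + 1), ∑ b : Fin (M + 1), A a b * u ^ (a : ℕ) * pu ^ (b : ℕ)) := by
  classical
  set zK : Fin N → K := fun a => algebraMap ℂ K (z a) with hzK
  set lK : Fin M → K := fun i => algebraMap ℂ K (lam i) with hlK
  set T : Matrix (Fin M ⊕ Fin N) (Fin M ⊕ Fin N) K[X][X] :=
    Matrix.fromBlocks
      (Matrix.diagonal fun i => (X : K[X][X]) - C (C (lK i)))
      (Matrix.of fun i a => (C (C (p i a)) : K[X][X]))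
      (Matrix.of fun a j => (C (C (x j a)) : K[X][X]))
      (Matrix.diagonal fun a => (C (X - C (zK a)) : K[X][X])) with hT
  have hPent : ∀ s t, (T s t).natDegree ≤ Sum.elim (fun _ : Fin M => 1) (fun _ : Fin N => 0) t := by
    rintro (i | a) (j | b) <;>
      simp only [hT, Matrix.fromBlocks_apply₁₁, Matrix.fromBlocks_apply₁₂,
        Matrix.fromBlocks_apply₂₁, Matrix.fromBlocks_apply₂₂, Matrix.diagonal_apply,
        Matrix.of_apply, Sum.elim_inl, Sum.elim_inr]
    · split
      · exact (natDegree_X_sub_C _).le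
      · simp
    · simp
    · simp
    · split <;> simp
  have hUent : ∀ s t b, ((T s t).coeff b).natDegree ≤
      Sum.elim (fun _ : Fin M => 0) (fun _ : Fin N => 1) t := by
    rintro (i | a) (j | b) c <;>
      simp only [hT, Matrix.fromBlocks_apply₁₁, Matrix.fromBlocks_apply₁₂,
        Matrix.fromBlocks_apply₂₁, Matrix.fromBlocks_apply₂₂, Matrix.diagonal_apply,
        Matrix.of_apply, Sum.elim_inl, Sum.elim_inr]
    · split
      · rw [Polynomial.coeff_sub, Polynomial.coeff_X, Polynomial.coeff_C]
        split_ifs <;> simp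
      · simp
    · rw [Polynomial.coeff_C]; split <;> simp
    · rw [Polynomial.coeff_C]; split <;> simp
    · split
      · rw [Polynomial.coeff_C]
        split
        · exact (natDegree_X_sub_C _).le
        · simp
      · simp
  set G : K[X][X] := T.det with hG
  have hdetG : G = ∑ σ : Equiv.Perm (Fin M ⊕ Fin N), Equiv.Perm.sign σ • ∏ i, T (σ i) i :=
    Matrix.det_apply T
  have h1 : G.natDegree ≤ M := by
    rw [hdetG]
    refine Polynomial.natDegree_sum_le_of_forall_le _ _ fun σ _ => ?_
    rw [Units.smul_def, zsmul_eq_mul]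
    refine Polynomial.natDegree_mul_le.trans ?_
    rw [Polynomial.natDegree_intCast, zero_add]
    refine ((capelli_prod_bound Finset.univ (fun i => T (σ i) i) _ _
      (fun i _ => hPent (σ i) i) (fun i _ => hUent (σ i) i)).1).trans ?_
    simp
  have h2 : ∀ b, (G.coeff b).natDegree ≤ N := by
    intro b
    rw [hdetG, Polynomial.finset_sum_coeff]
    refine Polynomial.natDegree_sum_le_of_forall_le _ _ fun σ _ => ?_
    rw [Units.smul_def, zsmul_eq_mul, ← Polynomial.C_eq_intCast, Polynomial.coeff_C_mul]
    refine Polynomial.natDegree_mul_le.trans ?_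
    rw [Polynomial.natDegree_intCast, zero_add]
    refine ((capelli_prod_bound Finset.univ (fun i => T (σ i) i) _ _
      (fun i _ => hPent (σ i) i) (fun i _ => hUent (σ i) i)).2 b).trans ?_
    simp
  refine ⟨fun a b => (G.coeff (b : ℕ)).coeff (a : ℕ), ?_⟩
  intro u pu hu hpu
  set φ : K[X][X] →+* K :=
    (Polynomial.evalRingHom pu).comp (Polynomial.mapRingHom (Polynomial.evalRingHom u)) with hφ
  -- evaluation of G as a double sum
  have hφG : φ G = ∑ a : Fin (N + 1), ∑ b : Fin (M + 1),
      (G.coeff (b : ℕ)).coeff (a : ℕ) * u ^ (a : ℕ) * pu ^ (b : ℕ) := by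
    have e1 : φ G = (G.map (Polynomial.evalRingHom u)).eval pu := by
      simp [hφ]
    have e2 : ∀ b : ℕ, (G.map (Polynomial.evalRingHom u)).coeff b =
        ∑ a ∈ Finset.range (N + 1), (G.coeff b).coeff a * u ^ a := by
      intro b
      rw [Polynomial.coeff_map, Polynomial.coe_evalRingHom]
      exact Polynomial.eval_eq_sum_range' (Nat.lt_succ_of_le (h2 b)) u
    have e3 : (∑ a : Fin (N + 1), ∑ b : Fin (M + 1),
          (G.coeff (b : ℕ)).coeff (a : ℕ) * u ^ (a : ℕ) * pu ^ (b : ℕ))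
        = ∑ b ∈ Finset.range (M + 1),
            (∑ a ∈ Finset.range (N + 1), (G.coeff b).coeff a * u ^ a) * pu ^ b := by
      have eA : ∀ (f : ℕ → ℕ → K), (∑ a : Fin (N + 1), ∑ b : Fin (M + 1), f (a : ℕ) (b : ℕ))
          = ∑ a ∈ Finset.range (N + 1), ∑ b ∈ Finset.range (M + 1), f a b := by
        intro f
        rw [Fin.sum_univ_eq_sum_range (fun a => ∑ b : Fin (M + 1), f a (b : ℕ)) (N + 1)]
        exact Finset.sum_congr rfl fun a _ => Fin.sum_univ_eq_sum_range (f a) (M + 1)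
      rw [eA (fun a b => (G.coeff b).coeff a * u ^ a * pu ^ b)]
      rw [Finset.sum_comm]
      refine Finset.sum_congr rfl fun b _ => ?_
      rw [Finset.sum_mul]
    rw [e1, Polynomial.eval_eq_sum_range'
      (Nat.lt_succ_of_le (Polynomial.natDegree_map_le.trans h1)), e3]
    exact Finset.sum_congr rfl fun b _ => by rw [e2 b]
  have hφT : T.map φ = Matrix.fromBlocks
      (Matrix.diagonal fun i => pu - lK i) (Matrix.of fun i a => p i a)
      (Matrix.of fun a j => x j a) (Matrix.diagonal fun a => u - zK a) := by
    ext st1 st2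
    rcases st1 with i | a <;> rcases st2 with j | b <;>
      simp [hT, hφ, Matrix.diagonal_apply, apply_ite] <;>
      split <;> simp_all
  haveI instD : Invertible (Matrix.diagonal fun a => u - zK a) :=
    Matrix.invertibleOfIsUnitDet _ (by
      rw [Matrix.det_diagonal]
      exact isUnit_iff_ne_zero.mpr
        (Finset.prod_ne_zero_iff.mpr fun a _ => sub_ne_zero.mpr (hu a)))
  haveI instA : Invertible (Matrix.diagonal fun i => pu - lK i) :=
    Matrix.invertibleOfIsUnitDet _ (by
      rw [Matrix.det_diagonal]
      exact isUnit_iff_ne_zero.mpr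
        (Finset.prod_ne_zero_iff.mpr fun i _ => sub_ne_zero.mpr (hpu i)))
  have hinvD : ⅟(Matrix.diagonal fun a => u - zK a)
      = Matrix.diagonal fun a => (u - zK a)⁻¹ := by
    apply invOf_eq_right_inv
    rw [Matrix.diagonal_mul_diagonal]
    have hfun : (fun a => (u - zK a) * (u - zK a)⁻¹) = fun _ => (1 : K) :=
      funext fun a => mul_inv_cancel₀ (sub_ne_zero.mpr (hu a))
    rw [hfun, Matrix.diagonal_one]
  have hinvA : ⅟(Matrix.diagonal fun i => pu - lK i)
      = Matrix.diagonal fun i => (pu - lK i)⁻¹ := by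
    apply invOf_eq_right_inv
    rw [Matrix.diagonal_mul_diagonal]
    have hfun : (fun i => (pu - lK i) * (pu - lK i)⁻¹) = fun _ => (1 : K) :=
      funext fun i => mul_inv_cancel₀ (sub_ne_zero.mpr (hpu i))
    rw [hfun, Matrix.diagonal_one]
  have part1 : φ G = (∏ a, (u - zK a)) * Matrix.det (Matrix.of fun i j : Fin M =>
      (if i = j then pu - lK i else 0) - ∑ a, x j a * p i a / (u - zK a)) := by
    rw [hG, RingHom.map_det, RingHom.mapMatrix_apply, hφT, Matrix.det_fromBlocks₂₂, Matrix.det_diagonal]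
    congr 1
    rw [hinvD]
    congr 1
    ext i j
    simp only [Matrix.sub_apply, Matrix.of_apply, Matrix.diagonal_apply, Matrix.mul_apply,
      Matrix.diagonal_apply, Finset.sum_ite_eq, Finset.sum_ite_eq', Finset.mem_univ, if_true, mul_ite, mul_zero,
      ite_mul, zero_mul]
    congr 1
    refine Finset.sum_congr rfl fun a _ => ?_
    rw [div_eq_mul_inv]
    ring
  have part2 : φ G = (∏ b, (pu - lK b)) * Matrix.det (Matrix.of fun i j : Fin N =>
      (if i = j then u - zK i else 0) - ∑ b, x b j * p b i / (pu - lK b)) := by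
    rw [hG, RingHom.map_det, RingHom.mapMatrix_apply, hφT, Matrix.det_fromBlocks₁₁, Matrix.det_diagonal]
    congr 1
    rw [hinvA, ← Matrix.det_transpose (Matrix.of fun i j : Fin N =>
      (if i = j then u - zK i else 0) - ∑ b, x b j * p b i / (pu - lK b))]
    congr 1
    ext a a'
    simp only [Matrix.transpose_apply, Matrix.sub_apply, Matrix.of_apply, Matrix.diagonal_apply,
      Matrix.mul_apply, Finset.sum_ite_eq, Finset.sum_ite_eq', Finset.mem_univ, if_true, mul_ite, mul_zero,
      ite_mul, zero_mul]
    congr 1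
    · rcases eq_or_ne a a' with h | h <;> simp [h, eq_comm]
    · refine Finset.sum_congr rfl fun i _ => ?_
      rw [div_eq_mul_inv]
      ring
  exact ⟨part1.symm.trans hφG, part2.symm.trans hφG⟩
end

section
/- (Gaudin Hamiltonian symmetry under duality, commutative shadow.) Define for a ∈ {1,…,N} the operator H_a = Σ_{b≠a} Ω^{(ab)}/(z_a − z_b) + Σ_{b=1}^M λ_b E_{bb}^{(a)} acting on ℂ[x_{ij}], where E_{ij}^{(a)} = x_{ia}∂_{ja} and Ω^{(ab)} = Σ_{i,j=1}^M E_{ij}^{(a)} E_{ji}^{(b)}; and define for a ∈ {1,…,M} the dual dynamical Hamiltonian H^∨_a = Σ_{b≠a} ((Σ_i E_{ab}^{(i)})(Σ_i E_{ba}^{(i)}) − Σ_i E_{aa}^{(i)})/(λ_a − λ_b) + Σ_{b=1}^N z_b E_{aa}^{(b)}. Then with the gl_N operators F_{ij}^{(a)} = x_{ai}∂_{aj}, the gl_N Gaudin Hamiltonian built from F with parameters (λ, z) swapped equals H^∨: namely, for each a ∈ {1,…,M}, Σ_{b≠a} (Σ_{i,j=1}^N F_{ij}^{(a)}F_{ji}^{(b)})/(λ_a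 − λ_b) + Σ_{b=1}^N z_b F_{bb}^{(a)} = H^∨_a as operators on ℂ[x_{ij} : 1≤i≤M, 1≤j≤N]. -/
open scoped BigOperators

/-- The `gl_M` generators `E_{ij}^{(a)} = x_{ia}∂_{ja}` acting on
`ℂ[x_{ij} : 1 ≤ i ≤ M, 1 ≤ j ≤ N]`. -/
noncomputable def Eop (M N : ℕ) (i j : Fin M) (a : Fin N) :
    Module.End ℂ (MvPolynomial (Fin M × Fin N) ℂ) :=
  LinearMap.mulLeft ℂ (MvPolynomial.X (i, a)) * (MvPolynomial.pderiv (j, a)).toLinearMap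

/-- The `gl_N` generators `F_{ij}^{(a)} = x_{ai}∂_{aj}` acting on
`ℂ[x_{ij} : 1 ≤ i ≤ M, 1 ≤ j ≤ N]`. -/
noncomputable def Fop (M N : ℕ) (i j : Fin N) (a : Fin M) :
    Module.End ℂ (MvPolynomial (Fin M × Fin N) ℂ) :=
  LinearMap.mulLeft ℂ (MvPolynomial.X (a, i)) * (MvPolynomial.pderiv (a, j)).toLinearMap

/-!
Both sides are brought to normal order (all `x` to the left of all `∂`). For `a ≠ b`,
`E_{ab}^{(i)} E_{ba}^{(j)} = x_{ai} ∂_{bi} x_{bj} ∂_{aj}` and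
`F_{ij}^{(a)} F_{ji}^{(b)} = x_{ai} ∂_{aj} x_{bj} ∂_{bi}` have the same normal-ordered part
`x_{ai} x_{bj} ∂_{bi} ∂_{aj}`, since partial derivatives commute; only the first product
picks up a contraction, `δ_{ij} x_{ai} ∂_{aj}`, and summed over `i, j` these contractions are
exactly the correction `Σ_i E_{aa}^{(i)}`. The diagonal terms agree verbatim:
`F_{bb}^{(a)} = x_{ab} ∂_{ab} = E_{aa}^{(b)}`.
-/

namespace MvPolynomial

open LinearMap

variable {R σ : Type*} [CommRing R]

theorem pderiv_mul_pderiv_comm (s t : σ) :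
    ((pderiv s).toLinearMap * (pderiv t).toLinearMap : Module.End R (MvPolynomial σ R)) =
      (pderiv t).toLinearMap * (pderiv s).toLinearMap := by
  classical
  have hbracket : ⁅pderiv s, pderiv t⁆ = (0 : Derivation R (MvPolynomial σ R) _) :=
    derivation_ext fun i => by
      rw [Derivation.commutator_apply, pderiv_X, pderiv_X]
      simp [Pi.single_apply, apply_ite]
  rw [← sub_eq_zero, ← LieRing.of_associative_ring_bracket, ← Derivation.commutator_coe_linear_map,
    hbracket, Derivation.coe_zero_linearMap]

theorem pderiv_mul_mulLeft_X [DecidableEq σ] (s t : σ) :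
    (pderiv s).toLinearMap * mulLeft R (X t : MvPolynomial σ R) =
      mulLeft R (X t) * (pderiv s).toLinearMap + if t = s then 1 else 0 := by
  refine LinearMap.ext fun p => ?_
  split_ifs with h
  · subst h
    simp [add_comm]
  · simp [pderiv_X_of_ne h]

theorem mulLeft_X_mul_pderiv_mul_mulLeft_X_mul_pderiv [DecidableEq σ] (p q r s : σ) :
    (mulLeft R (X p : MvPolynomial σ R) * (pderiv q).toLinearMap) *
        (mulLeft R (X r) * (pderiv s).toLinearMap) =
      mulLeft R (X p) * mulLeft R (X r) * ((pderiv q).toLinearMap * (pderiv s).toLinearMap) +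
        if r = q then mulLeft R (X p) * (pderiv s).toLinearMap else 0 := by
  calc _ = mulLeft R (X p) * ((pderiv q).toLinearMap * mulLeft R (X r)) *
        (pderiv s).toLinearMap := by noncomm_ring
    _ = _ := by
      rw [pderiv_mul_mulLeft_X]
      split_ifs <;> noncomm_ring

end MvPolynomial

open MvPolynomial in
theorem Eop_mul_Eop_of_ne {M N : ℕ} {a b : Fin M} (hab : a ≠ b) (i j : Fin N) :
    Eop M N a b i * Eop M N b a j =
      Fop M N i j a * Fop M N j i b + if i = j then Eop M N a a i else 0 := by
  have hba : ((b, j) : Fin M × Fin N) ≠ (a, j) := by simp [Ne.symm hab]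
  unfold Eop Fop
  rw [mulLeft_X_mul_pderiv_mul_mulLeft_X_mul_pderiv,
    mulLeft_X_mul_pderiv_mul_mulLeft_X_mul_pderiv, if_neg hba,
    pderiv_mul_pderiv_comm (b, i) (a, j), add_zero, add_right_inj]
  by_cases hij : i = j
  · subst hij
    simp
  · simp [Ne.symm hij, hij]

theorem sum_Eop_mul_sum_Eop_sub_of_ne {M N : ℕ} {a b : Fin M} (hab : a ≠ b) :
    (∑ i : Fin N, Eop M N a b i) * (∑ i : Fin N, Eop M N b a i) - ∑ i : Fin N, Eop M N a a i =
      ∑ i : Fin N, ∑ j : Fin N, Fop M N i j a * Fop M N j i b := by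
  simp only [Finset.sum_mul_sum, Eop_mul_Eop_of_ne hab, Finset.sum_add_distrib,
    Finset.sum_ite_eq, Finset.mem_univ, if_true, add_sub_cancel_right]

theorem gaudin_dynamical_interchange_general {M N : ℕ}
    (z : Fin N → ℂ) (lam : Fin M → ℂ) (a : Fin M) :
    (∑ b ∈ Finset.univ.erase a,
        (lam a - lam b)⁻¹ • (∑ i : Fin N, ∑ j : Fin N, Fop M N i j a * Fop M N j i b))
      + ∑ b : Fin N, z b • Fop M N b b a =
    (∑ b ∈ Finset.univ.erase a,
        (lam a - lam b)⁻¹ •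
          ((∑ i : Fin N, Eop M N a b i) * (∑ i : Fin N, Eop M N b a i)
            - ∑ i : Fin N, Eop M N a a i))
      + ∑ b : Fin N, z b • Eop M N a a b := by
  have hdiag (b : Fin N) : Fop M N b b a = Eop M N a a b := rfl
  simp only [hdiag]
  congr 1
  refine Finset.sum_congr rfl fun b hb => ?_
  rw [sum_Eop_mul_sum_Eop_sub_of_ne (Finset.ne_of_mem_erase hb).symm]

/-- Interchange of Gaudin and dynamical Hamiltonians under `(gl_M, gl_N)`
duality: for each `a ∈ {1,…,M}`, the `gl_N` Gaudin Hamiltonian (built from the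
`F`'s, with parameters `(λ, z)`) equals the `gl_M` dynamical Hamiltonian
`H^∨_a` (built from the `E`'s), as operators on `ℂ[x_{ij}]`. -/
theorem gaudin_dynamical_interchange {M N : ℕ}
    (z : Fin N → ℂ) (lam : Fin M → ℂ)
    (hz : Function.Injective z) (hlam : Function.Injective lam) (a : Fin M) :
    (∑ b ∈ Finset.univ.erase a,
        (lam a - lam b)⁻¹ • (∑ i : Fin N, ∑ j : Fin N, Fop M N i j a * Fop M N j i b))
      + ∑ b : Fin N, z b • Fop M N b b a =
    (∑ b ∈ Finset.univ.erase a,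
        (lam a - lam b)⁻¹ •
          ((∑ i : Fin N, Eop M N a b i) * (∑ i : Fin N, Eop M N b a i)
            - ∑ i : Fin N, Eop M N a a i))
      + ∑ b : Fin N, z b • Eop M N a a b :=
  gaudin_dynamical_interchange_general z lam a
end
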